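/- Let m ≥ 3, let l_1, ..., l_m > 0 and let n_1, ..., n_m be positive integers with l_1/n_1 = l_2/n_2 = ... = l_m/n_m and n_1 + ... + n_m even. Set k = n_1 π / l_1, ε_1 = 1 and ε_{j+1} = (-1)^{n_j} ε_j, and define V_j(x) = ε_j sin(k x) for j = 1, ..., m. Then V_j(0) = V_j(l_j) = 0 for all j and V_j'(l_j) = V_{j+1}'(0) for all j (indices cyclic mod m), and none of the V_j is identically zero; i.e., every polygon whose edge lengths satisfy these resonance conditions carries a localized eigenvector of the generalized Laplacian with eigenvalue -k². -/

import Mathlib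

/-!
Resonance means `k l_j = n_j π` for every edge, so each edge mode `ε_j sin (k x)` vanishes at both
ends of its edge, and its slope at the end of edge `j` is `(-1) ^ n_j` times its slope at the start.
The signs `ε_{j+1} = (-1) ^ n_j ε_j` absorb this factor along the path of edges; unwinding them,
`ε_j = (-1) ^ (n_0 + ⋯ + n_{j-1})`, so the flux also balances at the vertex closing the cycle
exactly because `∑ n_j` is even.
-/

open Real Finset

section SignRecurrence

variable {m : ℕ} {n : ℕ → ℕ} {ε : ℕ → ℝ}

theorem eq_neg_one_pow_partial_sum (hε0 : ε 0 = 1)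
    (hεrec : ∀ j, j + 1 < m → ε (j + 1) = (-1 : ℝ) ^ n j * ε j) :
    ∀ j < m, ε j = (-1 : ℝ) ^ ∑ i ∈ range j, n i := by
  intro j
  induction j with
  | zero => exact fun _ => by simpa using hε0
  | succ j ih =>
    intro hj
    rw [hεrec j hj, ih (by omega), sum_range_succ, pow_add, mul_comm]

theorem ne_zero_of_sign_recurrence (hε0 : ε 0 = 1)
    (hεrec : ∀ j, j + 1 < m → ε (j + 1) = (-1 : ℝ) ^ n j * ε j) :
    ∀ j < m, ε j ≠ 0 := fun j hj => by
  rw [eq_neg_one_pow_partial_sum hε0 hεrec j hj]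
  exact pow_ne_zero _ (by norm_num)

theorem succ_mod_eq_of_even_sum (heven : Even (∑ j ∈ range m, n j)) (hε0 : ε 0 = 1)
    (hεrec : ∀ j, j + 1 < m → ε (j + 1) = (-1 : ℝ) ^ n j * ε j) :
    ∀ j < m, ε ((j + 1) % m) = (-1 : ℝ) ^ n j * ε j := by
  intro j hj
  rcases (show j + 1 ≤ m by omega).lt_or_eq with hlt | hlast
  · rw [Nat.mod_eq_of_lt hlt, hεrec j hlt]
  · rw [eq_neg_one_pow_partial_sum hε0 hεrec j hj, ← pow_add, add_comm (n j),
      ← sum_range_succ, hlast, Nat.mod_self, hε0, heven.neg_one_pow]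

end SignRecurrence

theorem nat_mul_pi_div_mul_eq_of_div_eq {l₀ l : ℝ} {n₀ n : ℕ} (hl₀ : l₀ ≠ 0) (hn₀ : n₀ ≠ 0)
    (hn : n ≠ 0) (h : l / n = l₀ / n₀) : n₀ * π / l₀ * l = n * π := by
  rw [div_eq_div_iff (by exact_mod_cast hn) (by exact_mod_cast hn₀)] at h
  rw [div_mul_eq_mul_div, div_eq_iff hl₀]
  linear_combination π * h

theorem deriv_const_mul_sin_mul (c k x : ℝ) :
    deriv (fun y => c * sin (k * y)) x = c * k * cos (k * x) := by
  have hsin : HasDerivAt (fun y => sin (k * y)) (cos (k * x) * k) x := by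
    simpa using ((hasDerivAt_id' x).const_mul k).sin
  rw [(hsin.const_mul c).deriv]
  ring

theorem const_mul_sin_mul_ne_zero {c k : ℝ} (hc : c ≠ 0) (hk : k ≠ 0) :
    (fun x => c * sin (k * x)) ≠ 0 := fun h => by
  have hpeak := congrFun h (π / (2 * k))
  have hquarter : k * (π / (2 * k)) = π / 2 := by field_simp
  rw [Pi.zero_apply, hquarter, sin_pi_div_two, mul_one] at hpeak
  exact hc hpeak

theorem polygon_localized_eigenvector_general
    (m : ℕ)
    (l : ℕ → ℝ) (hl : ∀ j < m, 0 < l j)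
    (n : ℕ → ℕ) (hn : ∀ j < m, 0 < n j)
    (hres : ∀ j < m, l j / (n j : ℝ) = l 0 / (n 0 : ℝ))
    (heven : Even (∑ j ∈ Finset.range m, n j))
    (ε : ℕ → ℝ) (hε0 : ε 0 = 1)
    (hεrec : ∀ j, j + 1 < m → ε (j + 1) = (-1 : ℝ) ^ (n j) * ε j) :
    let k := (n 0 : ℝ) * π / l 0
    let V : ℕ → ℝ → ℝ := fun j x => ε j * Real.sin (k * x)
    (∀ j < m, V j 0 = 0 ∧ V j (l j) = 0) ∧
    (∀ j < m, deriv (V j) (l j) = deriv (V ((j + 1) % m)) 0) ∧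
    (∀ j < m, V j ≠ 0) := by
  intro k V
  have hkl : ∀ j < m, k * l j = n j * π := fun j hj =>
    nat_mul_pi_div_mul_eq_of_div_eq (hl 0 (by omega)).ne' (hn 0 (by omega)).ne' (hn j hj).ne'
      (hres j hj)
  refine ⟨fun j hj => ⟨by simp [V], by simp [V, hkl j hj, sin_nat_mul_pi]⟩, fun j hj => ?_,
    fun j hj => const_mul_sin_mul_ne_zero (ne_zero_of_sign_recurrence hε0 hεrec j hj) ?_⟩
  · simp only [V, deriv_const_mul_sin_mul, hkl j hj, cos_nat_mul_pi, mul_zero, cos_zero,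
      succ_mod_eq_of_even_sum heven hε0 hεrec j hj]
    ring
  · have hl₀ := hl 0 (by omega)
    have hn₀ := hn 0 (by omega)
    positivity

/-- Every polygon (m-gon, m ≥ 3) whose edge lengths satisfy the resonance
conditions carries a localized eigenvector of the generalized Laplacian.
Edges are indexed by j = 0, ..., m-1 and oriented cyclically. -/
theorem polygon_localized_eigenvector
    (m : ℕ) (hm : 3 ≤ m)
    (l : ℕ → ℝ) (hl : ∀ j < m, 0 < l j)
    (n : ℕ → ℕ) (hn : ∀ j < m, 0 < n j)
    (hres : ∀ j < m, l j / (n j : ℝ) = l 0 / (n 0 : ℝ))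
    (heven : Even (∑ j ∈ Finset.range m, n j))
    (ε : ℕ → ℝ) (hε0 : ε 0 = 1)
    (hεrec : ∀ j, j + 1 < m → ε (j + 1) = (-1 : ℝ) ^ (n j) * ε j) :
    let k := (n 0 : ℝ) * π / l 0
    let V : ℕ → ℝ → ℝ := fun j x => ε j * Real.sin (k * x)
    (∀ j < m, V j 0 = 0 ∧ V j (l j) = 0) ∧
    (∀ j < m, deriv (V j) (l j) = deriv (V ((j + 1) % m)) 0) ∧
    (∀ j < m, V j ≠ 0) :=
  polygon_localized_eigenvector_general m l hl n hn hres heven ε hε0 hεrec
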